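/- Let \(W\) be an alternating trail in a signed valence graph (signs alternate along consecutive valencies). If \(W\) traverses both valencies of some edge \(e = xy\) and these valencies have opposite signs and \(W\) traverses them in the same direction (both from \(x\) to \(y\), say), then deleting both occurrences of the valencies of \(e\) from \(W\) (and splicing the remaining fragments) yields an alternating trail with the same endpoints and the same parity of length as \(W\). -/

import Mathlib

/-!
The new trail follows `W` up to the first valency of `e`, then runs backwards along the segment
strictly between the two valencies, then follows `W` after the second one. It is a walk because
both valencies run from `x` to `y`: the reversed segment starts where the second valency starts
(at `x`, where the prefix ends) and ends where the first valency ends (at `y`, where the suffix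
starts). Along an alternating walk the sign of a valency is determined by the parity of its
position, so opposite signs of the two valencies of `e` make their positions `i` and `j` of
opposite parity; this is exactly what gives the valencies meeting at the two junctions opposite
signs.
-/

namespace ValenceGraph

variable {V F : Type*} {n : ℕ}

def IsWalk (ends : F → V × V) (vs : Fin (n + 1) → V) (es : Fin n → F) : Prop :=
  ∀ k : Fin n, ends (es k) = (vs k.castSucc, vs k.succ) ∨
    ends (es k) = (vs k.succ, vs k.castSucc)

def IsAlternating (M : F → Bool) (es : Fin n → F) : Prop :=
  ∀ k : Fin n, ∀ h : (k : ℕ) + 1 < n, M (es k) ≠ M (es ⟨(k : ℕ) + 1, h⟩)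

section Alternating

variable {M : F → Bool} {es : Fin n → F}

theorem IsAlternating.sign_eq_xor (h : IsAlternating M es) :
    ∀ (m : ℕ) (hm : m < n),
      M (es ⟨m, hm⟩) = (M (es ⟨0, by omega⟩) ^^ decide (m % 2 = 1))
  | 0, _ => by simp
  | m + 1, hm => by
    rw [Bool.eq_not_of_ne (h ⟨m, by omega⟩ hm).symm, h.sign_eq_xor m]
    rcases Nat.mod_two_eq_zero_or_one m with hm2 | hm2 <;> simp [Nat.add_mod, hm2]

theorem IsAlternating.sign_eq_iff (h : IsAlternating M es) (a b : Fin n) :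
    M (es a) = M (es b) ↔ (a : ℕ) % 2 = (b : ℕ) % 2 := by
  have ha := h.sign_eq_xor a a.2
  have hb := h.sign_eq_xor b b.2
  simp only [Fin.eta] at ha hb
  rw [ha, hb, Bool.xor_right_inj, decide_eq_decide]
  omega

end Alternating

/-- Positions `i` and `j` are skipped and the segment strictly between them is reversed. -/
def spliceEdgeIndex (i j k : ℕ) : ℕ :=
  if k < i then k else if k + 1 < j then i + j - 1 - k else k + 2

def spliceVertexIndex (i j k : ℕ) : ℕ :=
  if k < i then k else if k < j then i + j - k else k + 2

theorem spliceEdgeIndex_cases (i j k : ℕ) :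
    k < i ∧ spliceEdgeIndex i j k = k ∨
      i ≤ k ∧ k + 1 < j ∧ spliceEdgeIndex i j k = i + j - 1 - k ∨
      i ≤ k ∧ j ≤ k + 1 ∧ spliceEdgeIndex i j k = k + 2 := by
  unfold spliceEdgeIndex
  split_ifs <;> omega

theorem spliceVertexIndex_cases (i j k : ℕ) :
    k < i ∧ spliceVertexIndex i j k = k ∨
      i ≤ k ∧ k < j ∧ spliceVertexIndex i j k = i + j - k ∨
      i ≤ k ∧ j ≤ k ∧ spliceVertexIndex i j k = k + 2 := by
  unfold spliceVertexIndex
  split_ifs <;> omega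

theorem spliceEdgeIndex_injective (i j : ℕ) : Function.Injective (spliceEdgeIndex i j) := by
  intro a b hab
  have := spliceEdgeIndex_cases i j a
  have := spliceEdgeIndex_cases i j b
  omega

theorem exists_spliceEdgeIndex_eq {i j m : ℕ} (hij : i < j) (hj : j < n) (hm : m < n)
    (hmi : m ≠ i) (hmj : m ≠ j) : ∃ k < n - 2, spliceEdgeIndex i j k = m := by
  refine ⟨if m < i then m else if m < j then i + j - 1 - m else m - 2,
    by split_ifs <;> omega, ?_⟩
  unfold spliceEdgeIndex
  split_ifs <;> omega

def spliceEdges (es : Fin n → F) (i j : Fin n) (k : Fin (n - 2)) : F :=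
  es ⟨spliceEdgeIndex i j k, by have := spliceEdgeIndex_cases i j k; omega⟩

def spliceVertices (vs : Fin (n + 1) → V) {i j : Fin n} (hij : i < j) (k : Fin (n - 2 + 1)) : V :=
  vs ⟨spliceVertexIndex i j k, by have := spliceVertexIndex_cases i j k; omega⟩

section Splice

variable {es : Fin n → F} {i j : Fin n}

theorem spliceEdges_injective (h : Function.Injective es) :
    Function.Injective (spliceEdges es i j) := fun _ _ hab =>
  Fin.ext (spliceEdgeIndex_injective i j (congrArg Fin.val (h hab)))

theorem range_spliceEdges (hij : i < j) (h : Function.Injective es) :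
    Set.range (spliceEdges es i j) = Set.range es \ {es i, es j} := by
  ext e
  simp only [Set.mem_range, Set.mem_sdiff, Set.mem_insert_iff, Set.mem_singleton_iff]
  constructor
  · rintro ⟨k, rfl⟩
    refine ⟨⟨_, rfl⟩, ?_⟩
    have := spliceEdgeIndex_cases i j k
    simp only [spliceEdges, h.eq_iff, Fin.ext_iff]
    omega
  · rintro ⟨⟨m, rfl⟩, hm⟩
    simp only [h.eq_iff, Fin.ext_iff] at hm
    obtain ⟨k, hk, hkm⟩ := exists_spliceEdgeIndex_eq hij j.2 m.2 (by omega) (by omega)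
    exact ⟨⟨k, hk⟩, congrArg es (Fin.ext hkm)⟩

theorem IsAlternating.splice {M : F → Bool} (h : IsAlternating M es)
    (hsign : M (es i) ≠ M (es j)) : IsAlternating M (spliceEdges es i j) := by
  intro k hk
  have hparity := (h.sign_eq_iff i j).not.mp hsign
  rw [spliceEdges, spliceEdges, Ne, h.sign_eq_iff]
  have := spliceEdgeIndex_cases i j k
  have := spliceEdgeIndex_cases i j (k + 1)
  dsimp only
  omega

theorem IsWalk.splice {ends : F → V × V} {vs : Fin (n + 1) → V} (h : IsWalk ends vs es)
    (hij : i < j) (hx : vs i.castSucc = vs j.castSucc) (hy : vs i.succ = vs j.succ) :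
    IsWalk ends (spliceVertices vs hij) (spliceEdges es i j) := by
  have hv : ∀ a b : Fin (n + 1),
      ((a : ℕ) = b ∨ (a : ℕ) = j ∧ (b : ℕ) = i ∨ (a : ℕ) = i + 1 ∧ (b : ℕ) = j + 1) →
        vs a = vs b := by
    rintro a b (hab | ⟨ha, hb⟩ | ⟨ha, hb⟩)
    · rw [Fin.ext hab]
    · rw [show a = j.castSucc from Fin.ext ha, show b = i.castSucc from Fin.ext hb, hx]
    · rw [show a = i.succ from Fin.ext ha, show b = j.succ from Fin.ext hb, hy]
  intro k
  have hk := h ⟨spliceEdgeIndex i j k, by have := spliceEdgeIndex_cases i j k; omega⟩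
  have := spliceEdgeIndex_cases i j k
  have := spliceVertexIndex_cases i j k
  have := spliceVertexIndex_cases i j (k + 1)
  unfold spliceEdges
  by_cases hmid : (i : ℕ) ≤ k ∧ (k : ℕ) + 1 < j
  · convert hk.symm using 3 <;> apply hv <;>
      simp only [Fin.val_castSucc, Fin.val_succ] <;> omega
  · convert hk using 3 <;> apply hv <;> simp only [Fin.val_castSucc, Fin.val_succ] <;> omega

theorem spliceVertices_zero {vs : Fin (n + 1) → V} (hij : i < j)
    (hx : vs i.castSucc = vs j.castSucc) : spliceVertices vs hij 0 = vs 0 := by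
  have := spliceVertexIndex_cases i j 0
  unfold spliceVertices
  by_cases hi : (i : ℕ) = 0
  · rw [show (0 : Fin (n + 1)) = i.castSucc from Fin.ext hi.symm, hx]
    congr 1; ext; simp only [Fin.val_zero, Fin.val_castSucc]; omega
  · congr 1; ext; simp only [Fin.val_zero]; omega

theorem spliceVertices_last {vs : Fin (n + 1) → V} (hij : i < j)
    (hy : vs i.succ = vs j.succ) :
    spliceVertices vs hij (Fin.last (n - 2)) = vs (Fin.last n) := by
  have := spliceVertexIndex_cases i j (n - 2)
  unfold spliceVertices
  by_cases hj : (j : ℕ) + 1 = n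
  · rw [show Fin.last n = j.succ from Fin.ext hj.symm, ← hy]
    congr 1; ext; simp only [Fin.val_last, Fin.val_succ]; omega
  · congr 1; ext; simp only [Fin.val_last]; omega

end Splice

end ValenceGraph

open ValenceGraph

/-- Valencies are the elements of `F`, with endpoints `ends`; `true` stands for the sign `+`. -/
theorem stmt19 {V F : Type*} (ends : F → V × V) (M : F → Bool)
    (n : ℕ) (vs : Fin (n + 1) → V) (es : Fin n → F)
    (hinc : ∀ k : Fin n, ends (es k) = (vs k.castSucc, vs k.succ) ∨
      ends (es k) = (vs k.succ, vs k.castSucc))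
    (htrail : Function.Injective es)
    (halt : ∀ k : Fin n, ∀ h : (k : ℕ) + 1 < n, M (es k) ≠ M (es ⟨(k : ℕ) + 1, h⟩))
    (x y : V) (e₁ e₂ : F) (hsign : M e₁ ≠ M e₂)
    (i j : Fin n) (hij : (i : ℕ) < (j : ℕ)) (hesi : es i = e₁) (hesj : es j = e₂)
    -- both valencies are traversed in the same direction, from `x` to `y`:
    (hdiri : vs i.castSucc = x ∧ vs i.succ = y)
    (hdirj : vs j.castSucc = x ∧ vs j.succ = y) :
    ∃ (vs' : Fin (n - 2 + 1) → V) (es' : Fin (n - 2) → F),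
      (∀ k : Fin (n - 2), ends (es' k) = (vs' k.castSucc, vs' k.succ) ∨
        ends (es' k) = (vs' k.succ, vs' k.castSucc)) ∧
      Function.Injective es' ∧
      (∀ k : Fin (n - 2), ∀ h : (k : ℕ) + 1 < n - 2,
        M (es' k) ≠ M (es' ⟨(k : ℕ) + 1, h⟩)) ∧
      vs' 0 = vs 0 ∧ vs' (Fin.last (n - 2)) = vs (Fin.last n) ∧
      Set.range es' = Set.range es \ {e₁, e₂} := by
  subst hesi hesj
  have hx : vs i.castSucc = vs j.castSucc := hdiri.1.trans hdirj.1.symm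
  have hy : vs i.succ = vs j.succ := hdiri.2.trans hdirj.2.symm
  exact ⟨spliceVertices vs hij, spliceEdges es i j, IsWalk.splice hinc hij hx hy,
    spliceEdges_injective htrail, IsAlternating.splice halt hsign, spliceVertices_zero hij hx,
    spliceVertices_last hij hy, range_spliceEdges hij htrail⟩
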